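/- Let F be a field of characteristic zero, let F(y,z) be the field of rational functions in two variables y, z over F, and let Ω be a field extension of F(y,z) that is algebraic over F(y,z). Let σ'_y and σ'_z be field automorphisms of Ω whose restrictions to F(y,z) are the shift automorphisms σ_y and σ_z, respectively. Then for every f ∈ F(y,z): there exist u, v ∈ Ω with f = (σ'_y(u) − u) + (σ'_z(v) − v) if and only if there exist g, h ∈ F(y,z) with f = (σ_y(g) − g) + (σ_z(h) − h). -/
import Mathlib


open MvPolynomial

noncomputable section

/-- The field `F(y,z)` of rational functions in two variables over `F`
(`y` has index `0`, `z` has index `1`). -/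
abbrev FF (F : Type*) [Field F] := FractionRing (MvPolynomial (Fin 2) F)

/-- The rational function `y`. -/
def yv (F : Type*) [Field F] : FF F := algebraMap (MvPolynomial (Fin 2) F) (FF F) (X 0)

/-- The rational function `z`. -/
def zv (F : Type*) [Field F] : FF F := algebraMap (MvPolynomial (Fin 2) F) (FF F) (X 1)

open Polynomial Module

noncomputable section NT

variable (K : Type*) {Ω : Type*} [Field K] [Field Ω] [Algebra K Ω]

/-- Normalized trace via the minimal polynomial. -/
def nt (u : Ω) : K := -(minpoly K u).nextCoeff / (minpoly K u).natDegree

lemma nt_algebraMap (a : K) : nt K (algebraMap K Ω a) = a := by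
  rw [nt, minpoly.eq_X_sub_C]
  simp [nextCoeff, natDegree_X_sub_C]

lemma minpoly_conj (σ : K ≃+* K) (σ' : Ω ≃+* Ω)
    (hres : ∀ a : K, σ' (algebraMap K Ω a) = algebraMap K Ω (σ a))
    {u : Ω} (hu : IsIntegral K u) :
    minpoly K (σ' u) = (minpoly K u).map σ := by
  have hcomp : (algebraMap K Ω).comp (σ : K →+* K) = (σ' : Ω →+* Ω).comp (algebraMap K Ω) := by
    ext a; exact (hres a).symm
  refine (minpoly.eq_of_irreducible_of_monic ?_ ?_ ?_).symm
  · refine Monic.irreducible_of_irreducible_map (σ.symm : K →+* K) _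
      ((minpoly.monic hu).map _) ?_
    rw [Polynomial.map_map]
    have : (σ.symm : K →+* K).comp (σ : K →+* K) = RingHom.id K := by ext a; simp
    rw [this, Polynomial.map_id]
    exact minpoly.irreducible hu
  · rw [Polynomial.aeval_def, Polynomial.eval₂_map, hcomp,
      show σ' u = (σ' : Ω →+* Ω) u from rfl, ← Polynomial.hom_eval₂, ← Polynomial.aeval_def,
      minpoly.aeval, map_zero]
  · exact (minpoly.monic hu).map _

lemma nt_conj (σ : K ≃+* K) (σ' : Ω ≃+* Ω)
    (hres : ∀ a : K, σ' (algebraMap K Ω a) = algebraMap K Ω (σ a))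
    {u : Ω} (hu : IsIntegral K u) :
    nt K (σ' u) = σ (nt K u) := by
  rw [nt, nt, minpoly_conj K σ σ' hres hu, nextCoeff_map (σ : K →+* K).injective,
    natDegree_map, map_div₀, map_neg, map_natCast]
  rfl

/-- In a finite-dimensional subextension, `nt` is the normalized trace. -/
lemma nt_eq_trace_div [CharZero K] {M : Type*} [Field M] [Algebra K M]
    [FiniteDimensional K M] (x : M) :
    nt K x = Algebra.trace K M x / finrank K M := by
  have hx : IsIntegral K x := IsIntegral.of_finite K x
  let E := IntermediateField.adjoin K ({x} : Set M)
  haveI : FiniteDimensional K E := IntermediateField.adjoin.finiteDimensional hx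
  haveI : FiniteDimensional E M := FiniteDimensional.right K E M
  have hgen : algebraMap E M (IntermediateField.AdjoinSimple.gen K x) = x := rfl
  have h0 := Algebra.trace_algebraMap (R := E) (S := M) (IntermediateField.AdjoinSimple.gen K x)
  rw [hgen] at h0
  have h1 := Algebra.trace_trace (S := E) (T := M) (x := x) (R := K)
  rw [h0, map_nsmul] at h1
  have htr : Algebra.trace K M x
      = (finrank E M : K) * Algebra.trace K E (IntermediateField.AdjoinSimple.gen K x) := by
    rw [← h1, nsmul_eq_mul]
  have hminE : minpoly K (IntermediateField.AdjoinSimple.gen K x) = minpoly K x :=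
    IntermediateField.minpoly_gen K x
  have htrE : Algebra.trace K E (IntermediateField.AdjoinSimple.gen K x)
      = -(minpoly K x).nextCoeff := by
    have := PowerBasis.trace_gen_eq_nextCoeff_minpoly (IntermediateField.adjoin.powerBasis hx)
    rwa [IntermediateField.adjoin.powerBasis_gen, hminE] at this
  have hfr : finrank K M = (minpoly K x).natDegree * finrank E M := by
    rw [← IntermediateField.adjoin.finrank hx]
    exact (finrank_mul_finrank K E M).symm
  have hd : ((minpoly K x).natDegree : K) ≠ 0 := by
    exact_mod_cast Nat.cast_ne_zero.mpr (minpoly.natDegree_pos hx).ne'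
  have hm : ((finrank E M : K)) ≠ 0 := by
    exact_mod_cast Nat.cast_ne_zero.mpr (finrank_pos (R := E) (M := M)).ne'
  rw [nt, htr, htrE, hfr]
  push_cast
  field_simp

lemma nt_add [CharZero K] [Algebra.IsAlgebraic K Ω] (u v : Ω) :
    nt K (u + v) = nt K u + nt K v := by
  have hu : IsIntegral K u := (Algebra.IsIntegral.isIntegral u)
  have hv : IsIntegral K v := (Algebra.IsIntegral.isIntegral v)
  let L := IntermediateField.adjoin K ({u, v} : Set Ω)
  haveI : FiniteDimensional K L :=
    IntermediateField.finiteDimensional_adjoin (by rintro x (rfl | rfl) <;> assumption)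
  have hu' : u ∈ L := IntermediateField.subset_adjoin K _ (by left; rfl)
  have hv' : v ∈ L := IntermediateField.subset_adjoin K _ (by right; rfl)
  have key : ∀ (w : Ω) (hw : w ∈ L), nt K w = Algebra.trace K L ⟨w, hw⟩ / finrank K L := by
    intro w hw
    have h1 : algebraMap L Ω ⟨w, hw⟩ = w := rfl
    have h2 : minpoly K w = minpoly K (⟨w, hw⟩ : L) :=
      minpoly.algebraMap_eq (A := K) (algebraMap L Ω).injective (⟨w, hw⟩ : L)
    have h3 : nt K w = nt K (⟨w, hw⟩ : L) := by rw [nt, nt, h2]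
    rw [h3]; exact nt_eq_trace_div K (⟨w, hw⟩ : L)
  rw [key u hu', key v hv', key (u + v) (add_mem hu' hv')]
  have : (⟨u + v, add_mem hu' hv'⟩ : L) = ⟨u, hu'⟩ + ⟨v, hv'⟩ := rfl
  rw [this, map_add, add_div]

lemma nt_zero : nt K (0 : Ω) = 0 := by
  have := nt_algebraMap (Ω := Ω) K (0 : K)
  rwa [map_zero] at this

lemma nt_neg [CharZero K] [Algebra.IsAlgebraic K Ω] (u : Ω) : nt K (-u) = -nt K u := by
  have h := nt_add K u (-u)
  rw [add_neg_cancel, nt_zero] at h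
  linear_combination -h

lemma nt_sub [CharZero K] [Algebra.IsAlgebraic K Ω] (u v : Ω) :
    nt K (u - v) = nt K u - nt K v := by
  rw [sub_eq_add_neg, nt_add, nt_neg, sub_eq_add_neg]

end NT

/-- **Exactness descends along algebraic extensions.**
Let `F` be a field of characteristic zero, `σy, σz` the shift automorphisms of `F(y,z)`
(`σy y = y + 1`, `σy z = z`, `σz z = z + 1`, `σz y = y`), and let `Ω` be an algebraic
field extension of `F(y,z)` equipped with field automorphisms `σy', σz'` restricting to
`σy, σz` on `F(y,z)`.  Then for `f ∈ F(y,z)`: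
`f = (σy' u − u) + (σz' v − v)` for some `u, v ∈ Ω` iff
`f = (σy g − g) + (σz h − h)` for some `g, h ∈ F(y,z)`. -/
theorem exactness_descends_along_algebraic_extension
    (F : Type*) [Field F] [CharZero F]
    (σy σz : FF F ≃ₐ[F] FF F)
    (hσy1 : σy (yv F) = yv F + 1) (hσy2 : σy (zv F) = zv F)
    (hσz1 : σz (yv F) = yv F) (hσz2 : σz (zv F) = zv F + 1)
    (Ω : Type*) [Field Ω] [Algebra (FF F) Ω] [Algebra.IsAlgebraic (FF F) Ω]
    (σy' σz' : Ω ≃+* Ω)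
    (hres_y : ∀ a : FF F, σy' (algebraMap (FF F) Ω a) = algebraMap (FF F) Ω (σy a))
    (hres_z : ∀ a : FF F, σz' (algebraMap (FF F) Ω a) = algebraMap (FF F) Ω (σz a))
    (f : FF F) :
    (∃ u v : Ω, algebraMap (FF F) Ω f = (σy' u - u) + (σz' v - v)) ↔
      (∃ g h : FF F, f = (σy g - g) + (σz h - h)) := by
  haveI : CharZero (FF F) :=
    charZero_of_injective_algebraMap
      (IsFractionRing.injective (MvPolynomial (Fin 2) F) (FF F))
  constructor
  · rintro ⟨u, v, hf⟩
    refine ⟨nt (FF F) u, nt (FF F) v, ?_⟩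
    have h := congrArg (nt (FF F)) hf
    rw [nt_algebraMap, nt_add, nt_sub, nt_sub,
      nt_conj (FF F) (σy : FF F ≃+* FF F) σy' hres_y (Algebra.IsIntegral.isIntegral u),
      nt_conj (FF F) (σz : FF F ≃+* FF F) σz' hres_z (Algebra.IsIntegral.isIntegral v)] at h
    exact h
  · rintro ⟨g, h, hgh⟩
    refine ⟨algebraMap (FF F) Ω g, algebraMap (FF F) Ω h, ?_⟩
    rw [hgh, RingHom.map_add, RingHom.map_sub, RingHom.map_sub, ← hres_y, ← hres_z]
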